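/- RM satisfies the donation postulate: if W is a simple voting game on [n] and Ŵ is the game obtained when player j donates its vote to player i, then the Recursive Measure of player i in Ŵ satisfies R̂M_i ≥ max( RM_i, RM_j ), where RM denotes the Recursive Measure in W. -/

import Mathlib

open Finset

variable {α : Type*} [Fintype α] [DecidableEq α]

/-- A simple voting game on the player set `α`: a monotone collection of winning
coalitions in which the empty coalition loses and the full coalition wins. -/
def SimpleVotingGame (W : Finset (Finset α)) : Prop :=
  (∀ S T : Finset α, S ∈ W → S ⊆ T → T ∈ W) ∧ (∅ : Finset α) ∉ W ∧ (univ : Finset α) ∈ W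

/-- Player `i` is YES-decisive in the division `S`. -/
def YesDecisive (W : Finset (Finset α)) (i : α) (S : Finset α) : Prop :=
  i ∈ S ∧ S ∈ W ∧ S.erase i ∉ W

/-- Player `i` is NO-decisive in the division `S`. -/
def NoDecisive (W : Finset (Finset α)) (i : α) (S : Finset α) : Prop :=
  i ∉ S ∧ S ∉ W ∧ insert i S ∈ W

/-- The loyal children of a winning division `S`: the winning divisions `S \ {k}`, `k ∈ S`. -/
def LCwin (W : Finset (Finset α)) (S : Finset α) : Finset (Finset α) :=
  (S.image fun k => S.erase k).filter (· ∈ W)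

/-- The loyal children of a losing division `S`: the losing divisions `S ∪ {k}`, `k ∉ S`. -/
def LCloss (W : Finset (Finset α)) (S : Finset α) : Finset (Finset α) :=
  (Sᶜ.image fun k => insert k S).filter (· ∉ W)

/-- The YES-efficacy score `α⁺_i(S)`: `1` if `i` is YES-decisive in `S`, `0` if `S` is
losing or `i ∉ S`, and otherwise the arithmetic mean of `α⁺_i` over the loyal children. -/
noncomputable def alphaPlus (W : Finset (Finset α)) (i : α) (S : Finset α) : ℝ :=
  if i ∈ S ∧ S ∈ W ∧ S.erase i ∉ W then 1
  else if S ∉ W ∨ i ∉ S then 0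
  else (∑ T ∈ (LCwin W S).attach, alphaPlus W i T.1) / (LCwin W S).card
termination_by S.card
decreasing_by
  obtain ⟨T, hT⟩ := T
  simp only [LCwin, Finset.mem_filter, Finset.mem_image] at hT
  obtain ⟨⟨k, hk, rfl⟩, -⟩ := hT
  simpa using Finset.card_erase_lt_of_mem hk

/-- The NO-efficacy score `α⁻_i(S)`: `1` if `i` is NO-decisive in `S`, `0` if `S` is
winning or `i ∈ S`, and otherwise the arithmetic mean of `α⁻_i` over the loyal children. -/
noncomputable def alphaMinus (W : Finset (Finset α)) (i : α) (S : Finset α) : ℝ :=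
  if i ∉ S ∧ S ∉ W ∧ insert i S ∈ W then 1
  else if S ∈ W ∨ i ∈ S then 0
  else (∑ T ∈ (LCloss W S).attach, alphaMinus W i T.1) / (LCloss W S).card
termination_by Sᶜ.card
decreasing_by
  obtain ⟨T, hT⟩ := T
  simp only [LCloss, Finset.mem_filter, Finset.mem_image] at hT
  obtain ⟨⟨k, hk, rfl⟩, -⟩ := hT
  rw [Finset.compl_insert]
  exact Finset.card_erase_lt_of_mem hk

/-- The efficacy score `α_i(S) = α⁺_i(S) + α⁻_i(S)`. -/
noncomputable def alphaScore (W : Finset (Finset α)) (i : α) (S : Finset α) : ℝ :=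
  alphaPlus W i S + alphaMinus W i S

/-- The Recursive Measure of YES-voting power (a priori, equiprobable divisions). -/
noncomputable def RMplus (W : Finset (Finset α)) (i : α) : ℝ :=
  (1 / 2 ^ Fintype.card α) * ∑ S : Finset α, alphaPlus W i S

/-- The Recursive Measure of NO-voting power (a priori, equiprobable divisions). -/
noncomputable def RMminus (W : Finset (Finset α)) (i : α) : ℝ :=
  (1 / 2 ^ Fintype.card α) * ∑ S : Finset α, alphaMinus W i S

/-- The Recursive Measure of voting power of player `i` (a priori):
`RM_i = 2^{-m} · Σ_S α_i(S)` where `m` is the number of players. -/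
noncomputable def RM (W : Finset (Finset α)) (i : α) : ℝ :=
  (1 / 2 ^ Fintype.card α) * ∑ S : Finset α, alphaScore W i S

/-- `d` is a dummy voter: `d` is decisive in no division. -/
def IsDummy (W : Finset (Finset α)) (d : α) : Prop :=
  ∀ S : Finset α, d ∉ S → (insert d S ∈ W ↔ S ∈ W)

/-- Player `j` weakly dominates player `i`. -/
def WeaklyDominates (W : Finset (Finset α)) (j i : α) : Prop :=
  ∀ S : Finset α, i ∉ S → j ∉ S → insert i S ∈ W → insert j S ∈ W

/-- `What` is the game obtained from `W` by player `j` donating its vote to player `i`. -/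
def Donation (W What : Finset (Finset α)) (i j : α) : Prop :=
  ∀ S : Finset α, i ∉ S → j ∉ S →
    (insert i (insert j S) ∈ What ↔ insert i (insert j S) ∈ W) ∧
    (insert i S ∈ What ↔ insert i (insert j S) ∈ W) ∧
    (insert j S ∈ What ↔ S ∈ W) ∧
    (S ∈ What ↔ S ∈ W)

/-- `What` is obtained from `W` by inducing a (weak, symmetric) quarrel between `i` and `j`. -/
def Quarrel (W What : Finset (Finset α)) (i j : α) : Prop :=
  ∀ S : Finset α, i ∉ S → j ∉ S →
    (insert i (insert j S) ∈ What ↔ (insert i S ∈ W ∨ insert j S ∈ W)) ∧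
    (S ∈ What ↔ (insert i S ∈ W ∧ insert j S ∈ W)) ∧
    (insert i S ∈ What ↔ insert i S ∈ W) ∧
    (insert j S ∈ What ↔ insert j S ∈ W)

/-- The voting-independent (product) probability of a division `S`, given the
individual YES-vote probabilities `p`. -/
noncomputable def prodDist (p : α → ℝ) (S : Finset α) : ℝ :=
  (∏ k ∈ S, p k) * ∏ k ∈ Sᶜ, (1 - p k)

/-- The generalized Recursive Measure of YES-voting power under a
voting-independent probability distribution with vote probabilities `p`. -/
noncomputable def RMplusP (W : Finset (Finset α)) (p : α → ℝ) (i : α) : ℝ :=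
  ∑ S : Finset α, alphaPlus W i S * prodDist p S

/-- The generalized Recursive Measure of NO-voting power under a
voting-independent probability distribution with vote probabilities `p`. -/
noncomputable def RMminusP (W : Finset (Finset α)) (p : α → ℝ) (i : α) : ℝ :=
  ∑ S : Finset α, alphaMinus W i S * prodDist p S

/-!
Everything reduces to a monotonicity statement about YES-efficacy. NO-efficacy in `W` at `S` is
YES-efficacy in the dual game `{T | Tᶜ ∉ W}` at `Sᶜ`, and donating commutes with dualizing.
Relabelling by the transposition `(i j)` turns `RM_j` into `RM_i` without changing the donated
game, so both bounds follow from `α⁺_i(W, S) ≤ α⁺_i(Ŵ, S)` for every monotone `W`. This is proved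
by induction on `S`: every loyal child of `S` in `W` is a loyal child in `Ŵ`, scores compare by
induction, and each extra loyal child in `Ŵ` is a division where `i` is YES-decisive, so it
scores `1` and can only raise the mean.
-/

open scoped BigOperators

section Mean

variable {ι : Type*} [DecidableEq ι] {s t : Finset ι} {g : ι → ℝ}

lemma expect_le_expect_of_subset (hst : s ⊆ t) (hs : s.Nonempty)
    (h : ∀ k ∈ t \ s, 𝔼 l ∈ t, g l ≤ g k) : 𝔼 k ∈ s, g k ≤ 𝔼 k ∈ t, g k := by
  have hs₀ : (0 : ℝ) < #s := by exact_mod_cast hs.card_pos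
  have ht₀ : (#t : ℝ) ≠ 0 := by exact_mod_cast (hs.mono hst).card_pos.ne'
  have hsum_t : ∑ k ∈ t, g k = (𝔼 k ∈ t, g k) * #t := by
    rw [expect_eq_sum_div_card, div_mul_cancel₀ _ ht₀]
  have hsdiff : (#(t \ s) : ℝ) * 𝔼 k ∈ t, g k ≤ ∑ k ∈ t \ s, g k := by
    simpa only [nsmul_eq_mul] using card_nsmul_le_sum _ _ _ h
  have hcard : (#t : ℝ) = #(t \ s) + #s := by
    exact_mod_cast (card_sdiff_add_card_eq_card hst).symm
  rw [hcard] at hsum_t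
  rw [expect_eq_sum_div_card (s := s), div_le_iff₀ hs₀]
  linarith [sum_sdiff hst (f := g)]

end Mean

lemma sum_attach_filter_image_div_card {β ι : Type*} [DecidableEq β] {s : Finset ι}
    {g : ι → β} (hg : Set.InjOn g s) (p : β → Prop) [DecidablePred p] (F : β → ℝ) :
    (∑ T ∈ ((s.image g).filter p).attach, F T) / #((s.image g).filter p) =
      𝔼 k ∈ s.filter (fun k => p (g k)), F (g k) := by
  have hg' : Set.InjOn g (s.filter fun k => p (g k)) := hg.mono (filter_subset _ _)
  rw [sum_attach _ F, filter_image, sum_image hg', card_image_of_injOn hg',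
    expect_eq_sum_div_card]

section Recursion

omit [Fintype α]

variable {W : Finset (Finset α)} {i : α} {S : Finset α}

def winErasures (W : Finset (Finset α)) (S : Finset α) : Finset α :=
  S.filter fun k => S.erase k ∈ W

lemma alphaPlus_eq_ite (W : Finset (Finset α)) (i : α) (S : Finset α) :
    alphaPlus W i S = if i ∈ S ∧ S ∈ W ∧ S.erase i ∉ W then 1
      else if S ∉ W ∨ i ∉ S then 0
      else 𝔼 k ∈ winErasures W S, alphaPlus W i (S.erase k) := by
  rw [alphaPlus, LCwin, sum_attach_filter_image_div_card (erase_injOn S)]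
  rfl

lemma alphaPlus_of_yesDecisive (h : YesDecisive W i S) : alphaPlus W i S = 1 := by
  rw [alphaPlus_eq_ite]
  exact if_pos h

lemma alphaPlus_of_notMem_game (h : S ∉ W) : alphaPlus W i S = 0 := by
  rw [alphaPlus_eq_ite, if_neg (fun h' => h h'.2.1), if_pos (.inl h)]

lemma alphaPlus_of_notMem (h : i ∉ S) : alphaPlus W i S = 0 := by
  rw [alphaPlus_eq_ite, if_neg (fun h' => h h'.1), if_pos (.inr h)]

lemma alphaPlus_of_erase_mem (hi : i ∈ S) (hS : S ∈ W) (h : S.erase i ∈ W) :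
    alphaPlus W i S = 𝔼 k ∈ winErasures W S, alphaPlus W i (S.erase k) := by
  rw [alphaPlus_eq_ite, if_neg (fun h' => h'.2.2 h), if_neg (by tauto)]

lemma mem_winErasures_of_erase_mem (hi : i ∈ S) (h : S.erase i ∈ W) : i ∈ winErasures W S :=
  mem_filter.2 ⟨hi, h⟩

lemma alphaPlus_mem_Icc (W : Finset (Finset α)) (i : α) (S : Finset α) :
    alphaPlus W i S ∈ Set.Icc 0 1 := by
  induction S using Finset.strongInduction with
  | H S ih =>
    by_cases hdec : YesDecisive W i S
    · simp [alphaPlus_of_yesDecisive hdec]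
    by_cases hS : S ∈ W
    · by_cases hi : i ∈ S
      · have h : S.erase i ∈ W := by simpa [YesDecisive, hi, hS] using hdec
        have hchild : ∀ k ∈ winErasures W S, alphaPlus W i (S.erase k) ∈ Set.Icc 0 1 :=
          fun k hk => ih _ (erase_ssubset (mem_filter.1 hk).1)
        rw [alphaPlus_of_erase_mem hi hS h]
        exact ⟨expect_nonneg fun k hk => (hchild k hk).1,
          expect_le ⟨i, mem_winErasures_of_erase_mem hi h⟩ fun k hk => (hchild k hk).2⟩
      · simp [alphaPlus_of_notMem hi]
    · simp [alphaPlus_of_notMem_game hS]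

lemma alphaPlus_nonneg (W : Finset (Finset α)) (i : α) (S : Finset α) : 0 ≤ alphaPlus W i S :=
  (alphaPlus_mem_Icc W i S).1

lemma alphaPlus_le_one (W : Finset (Finset α)) (i : α) (S : Finset α) : alphaPlus W i S ≤ 1 :=
  (alphaPlus_mem_Icc W i S).2

end Recursion

section Duality

variable {W : Finset (Finset α)} {i : α}

def dualGame (W : Finset (Finset α)) : Finset (Finset α) :=
  univ.filter fun T => Tᶜ ∉ W

@[simp]
lemma mem_dualGame {T : Finset α} : T ∈ dualGame W ↔ Tᶜ ∉ W := by
  simp [dualGame]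

lemma IsUpperSet.dualGame (hW : IsUpperSet (W : Set (Finset α))) :
    IsUpperSet (dualGame W : Set (Finset α)) := by
  intro S T hST hS
  simp only [mem_coe, mem_dualGame] at hS ⊢
  exact fun hT => hS (hW (compl_le_compl hST) hT)

def loseInsertions (W : Finset (Finset α)) (S : Finset α) : Finset α :=
  Sᶜ.filter fun k => insert k S ∉ W

lemma alphaMinus_eq_ite (W : Finset (Finset α)) (i : α) (S : Finset α) :
    alphaMinus W i S = if i ∉ S ∧ S ∉ W ∧ insert i S ∈ W then 1
      else if S ∈ W ∨ i ∈ S then 0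
      else 𝔼 k ∈ loseInsertions W S, alphaMinus W i (insert k S) := by
  rw [alphaMinus, LCloss, sum_attach_filter_image_div_card (insert_inj_on' S)]
  rfl

lemma alphaPlus_dualGame (W : Finset (Finset α)) (i : α) (T : Finset α) :
    alphaPlus (dualGame W) i T = alphaMinus W i Tᶜ := by
  induction T using Finset.strongInduction with
  | H T ih =>
    have hchildren : winErasures (dualGame W) T = loseInsertions W Tᶜ := by
      ext k
      simp [winErasures, loseInsertions, compl_erase]
    rw [alphaPlus_eq_ite, alphaMinus_eq_ite, hchildren]
    simp only [mem_dualGame, compl_erase, mem_compl, not_not]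
    congr 2
    refine expect_congr rfl fun k hk => ?_
    have hkT : k ∈ T := by simpa using (mem_filter.1 hk).1
    rw [ih _ (erase_ssubset hkT), compl_erase]

lemma alphaMinus_eq_alphaPlus_dualGame (W : Finset (Finset α)) (i : α) (S : Finset α) :
    alphaMinus W i S = alphaPlus (dualGame W) i Sᶜ := by
  rw [alphaPlus_dualGame, compl_compl]

lemma RM_eq_sum_alphaPlus_add_sum_alphaPlus_dualGame (W : Finset (Finset α)) (i : α) :
    RM W i = 1 / 2 ^ Fintype.card α *
      (∑ S, alphaPlus W i S + ∑ S, alphaPlus (dualGame W) i S) := by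
  simp only [RM, alphaScore, sum_add_distrib, alphaMinus_eq_alphaPlus_dualGame]
  congr 2
  exact Equiv.sum_comp (compl_involutive.toPerm _) fun S => alphaPlus (dualGame W) i S

end Duality

section Relabelling

omit [Fintype α] [DecidableEq α]

variable {β : Type*} (e : α ≃ β) (W : Finset (Finset α))

def relabelGame : Finset (Finset β) :=
  W.map e.finsetCongr.toEmbedding

variable {e W}

lemma mem_relabelGame {T : Finset β} : T ∈ relabelGame e W ↔ T.map e.symm.toEmbedding ∈ W := by
  simp [relabelGame, mem_map_equiv, Equiv.finsetCongr_apply]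

@[simp]
lemma map_mem_relabelGame {S : Finset α} : S.map e.toEmbedding ∈ relabelGame e W ↔ S ∈ W := by
  simp [mem_relabelGame, map_map]

lemma IsUpperSet.relabelGame (hW : IsUpperSet (W : Set (Finset α))) :
    IsUpperSet (relabelGame e W : Set (Finset β)) := by
  intro S T hST hS
  simp only [mem_coe, mem_relabelGame] at hS ⊢
  exact hW (map_subset_map.2 hST) hS

variable [DecidableEq α] [DecidableEq β]

lemma winErasures_relabelGame (S : Finset α) :
    winErasures (relabelGame e W) (S.map e.toEmbedding) = (winErasures W S).map e.toEmbedding := by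
  rw [winErasures, winErasures, filter_map]
  congr 1
  refine filter_congr fun k _ => ?_
  rw [Function.comp_apply, ← map_erase, map_mem_relabelGame]

lemma alphaPlus_relabelGame (i : α) (S : Finset α) :
    alphaPlus (relabelGame e W) (e i) (S.map e.toEmbedding) = alphaPlus W i S := by
  induction S using Finset.strongInduction with
  | H S ih =>
    rw [alphaPlus_eq_ite, alphaPlus_eq_ite, winErasures_relabelGame,
      map_eq_image e.toEmbedding (winErasures W S), expect_image e.toEmbedding.injective.injOn]
    have hchild : ∀ k ∈ winErasures W S,
        alphaPlus (relabelGame e W) (e i) ((S.map e.toEmbedding).erase (e.toEmbedding k)) =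
          alphaPlus W i (S.erase k) := fun k hk => by
      rw [← map_erase, ih _ (erase_ssubset (mem_filter.1 hk).1)]
    have herase : (S.map e.toEmbedding).erase (e i) = (S.erase i).map e.toEmbedding :=
      (map_erase ..).symm
    rw [expect_congr rfl hchild, herase]
    simp only [mem_map_equiv, Equiv.symm_apply_apply, map_mem_relabelGame]

variable [Fintype α] [Fintype β]

lemma dualGame_relabelGame : dualGame (relabelGame e W) = relabelGame e (dualGame W) := by
  ext T
  have hcompl : (T.map e.symm.toEmbedding)ᶜ = Tᶜ.map e.symm.toEmbedding := by
    ext; simp [mem_map_equiv]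
  simp [mem_relabelGame, hcompl]

lemma RM_relabelGame (i : α) : RM (relabelGame e W) (e i) = RM W i := by
  have hsum : ∀ V : Finset (Finset α),
      ∑ T, alphaPlus (relabelGame e V) (e i) T = ∑ S, alphaPlus V i S := fun V => by
    rw [← Equiv.sum_comp e.finsetCongr]
    simp [Equiv.finsetCongr_apply, alphaPlus_relabelGame]
  rw [RM_eq_sum_alphaPlus_add_sum_alphaPlus_dualGame,
    RM_eq_sum_alphaPlus_add_sum_alphaPlus_dualGame, dualGame_relabelGame, hsum, hsum,
    Fintype.card_congr e]

end Relabelling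

section Donation

variable {W : Finset (Finset α)} {i j : α}

def donateGame (W : Finset (Finset α)) (i j : α) : Finset (Finset α) :=
  univ.filter fun S => (if i ∈ S then insert j S else S.erase j) ∈ W

lemma mem_donateGame {S : Finset α} :
    S ∈ donateGame W i j ↔ (if i ∈ S then insert j S else S.erase j) ∈ W := by
  simp [donateGame]

lemma Donation.eq_donateGame {What : Finset (Finset α)} (h : Donation W What i j) (hij : i ≠ j) :
    What = donateGame W i j := by
  ext S
  have hiU : i ∉ (S.erase i).erase j := fun hi => notMem_erase i S (mem_of_mem_erase hi)
  have hjU : j ∉ (S.erase i).erase j := notMem_erase j _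
  obtain ⟨hboth, hi, hj, hnone⟩ := h _ hiU hjU
  rw [mem_donateGame]
  by_cases hiS : i ∈ S <;> by_cases hjS : j ∈ S <;> simp only [hiS, if_true, if_false]
  · rw [insert_eq_of_mem hjS]
    rwa [insert_erase (mem_erase.2 ⟨hij.symm, hjS⟩), insert_erase hiS] at hboth
  · rwa [insert_comm, erase_eq_of_notMem (fun h => hjS (mem_of_mem_erase h)),
      insert_erase hiS] at hi
  · rwa [erase_eq_of_notMem hiS, insert_erase hjS] at hj
  · rw [erase_eq_of_notMem hjS]
    rwa [erase_eq_of_notMem hiS, erase_eq_of_notMem hjS] at hnone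

lemma dualGame_donateGame : dualGame (donateGame W i j) = donateGame (dualGame W) i j := by
  ext S
  simp only [mem_dualGame, mem_donateGame, mem_compl]
  split_ifs <;> simp [compl_insert, compl_erase]

omit [Fintype α] in
lemma map_swap_eq_self {X : Finset α} (h : i ∈ X ↔ j ∈ X) :
    X.map (Equiv.swap i j).toEmbedding = X := by
  ext x
  rw [mem_map_equiv, Equiv.symm_swap, Equiv.swap_apply_def]
  split_ifs with hxi hxj
  · rw [hxi, h]
  · rw [hxj, h]
  · rfl

lemma donateGame_relabelGame_swap :
    donateGame (relabelGame (Equiv.swap i j) W) i j = donateGame W i j := by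
  ext S
  rw [mem_donateGame, mem_donateGame, mem_relabelGame, Equiv.symm_swap]
  congr! 1
  apply map_swap_eq_self
  split_ifs with hi
  · simp [hi]
  · simp [hi]

lemma mem_donateGame_of_mem (hW : IsUpperSet (W : Set (Finset α))) {T : Finset α} (hi : i ∈ T)
    (hT : T ∈ W) : T ∈ donateGame W i j := by
  rw [mem_donateGame, if_pos hi]
  exact hW (subset_insert j T) hT

lemma yesDecisive_donateGame (hW : IsUpperSet (W : Set (Finset α))) {T : Finset α} (hi : i ∈ T)
    (hT : T ∈ donateGame W i j) (h : T.erase i ∉ W) : YesDecisive (donateGame W i j) i T := by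
  refine ⟨hi, hT, fun h' => h (hW (erase_subset j _) ?_)⟩
  simpa [mem_donateGame] using h'

lemma alphaPlus_le_alphaPlus_donateGame (hW : IsUpperSet (W : Set (Finset α)))
    (S : Finset α) : alphaPlus W i S ≤ alphaPlus (donateGame W i j) i S := by
  induction S using Finset.strongInduction with
  | H S ih =>
    by_cases hiS : i ∈ S
    swap
    · rw [alphaPlus_of_notMem hiS]
      exact alphaPlus_nonneg _ _ _
    by_cases hS : S ∈ W
    swap
    · rw [alphaPlus_of_notMem_game hS]
      exact alphaPlus_nonneg _ _ _
    have hSV : S ∈ donateGame W i j := mem_donateGame_of_mem hW hiS hS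
    by_cases hSi : S.erase i ∈ W
    swap
    · rw [alphaPlus_of_yesDecisive ⟨hiS, hS, hSi⟩,
        alphaPlus_of_yesDecisive (yesDecisive_donateGame hW hiS hSV hSi)]
    by_cases hSiV : S.erase i ∈ donateGame W i j
    swap
    · rw [alphaPlus_of_yesDecisive ⟨hiS, hSV, hSiV⟩]
      exact alphaPlus_le_one _ _ _
    have hiA : i ∈ winErasures W S := mem_winErasures_of_erase_mem hiS hSi
    have hsub : winErasures W S ⊆ winErasures (donateGame W i j) S := fun k hk => by
      obtain ⟨hkS, hkW⟩ := mem_filter.1 hk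
      refine mem_filter.2 ⟨hkS, ?_⟩
      rcases eq_or_ne k i with rfl | hki
      · exact hSiV
      · exact mem_donateGame_of_mem hW (mem_erase.2 ⟨hki.symm, hiS⟩) hkW
    have hextra : ∀ k ∈ winErasures (donateGame W i j) S \ winErasures W S,
        alphaPlus (donateGame W i j) i (S.erase k) = 1 := fun k hk => by
      obtain ⟨hkV, hkW⟩ := mem_sdiff.1 hk
      obtain ⟨hkS, hSkV⟩ := mem_filter.1 hkV
      have hki : k ≠ i := fun h => hkW (h ▸ hiA)
      have hSkW : S.erase k ∉ W := fun h => hkW (mem_filter.2 ⟨hkS, h⟩)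
      exact alphaPlus_of_yesDecisive (yesDecisive_donateGame hW (mem_erase.2 ⟨hki.symm, hiS⟩)
        hSkV fun h => hSkW (hW (erase_subset i _) h))
    rw [alphaPlus_of_erase_mem hiS hS hSi, alphaPlus_of_erase_mem hiS hSV hSiV]
    calc 𝔼 k ∈ winErasures W S, alphaPlus W i (S.erase k)
        ≤ 𝔼 k ∈ winErasures W S, alphaPlus (donateGame W i j) i (S.erase k) :=
          expect_le_expect fun k hk => ih _ (erase_ssubset (mem_filter.1 hk).1)
      _ ≤ 𝔼 k ∈ winErasures (donateGame W i j) S, alphaPlus (donateGame W i j) i (S.erase k) :=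
          expect_le_expect_of_subset hsub ⟨i, hiA⟩ fun k hk => by
            rw [hextra k hk, ← alphaPlus_of_erase_mem hiS hSV hSiV]
            exact alphaPlus_le_one _ _ _

lemma RM_le_RM_donateGame (hW : IsUpperSet (W : Set (Finset α))) :
    RM W i ≤ RM (donateGame W i j) i := by
  rw [RM_eq_sum_alphaPlus_add_sum_alphaPlus_dualGame,
    RM_eq_sum_alphaPlus_add_sum_alphaPlus_dualGame, dualGame_donateGame]
  gcongr with S _ S _
  · exact alphaPlus_le_alphaPlus_donateGame hW S
  · exact alphaPlus_le_alphaPlus_donateGame hW.dualGame S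

end Donation

/-- RM satisfies the donation postulate. -/
theorem rm_donation {n : ℕ} (W What : Finset (Finset (Fin n)))
    (hW : SimpleVotingGame W) (i j : Fin n) (hij : i ≠ j)
    (hdon : Donation W What i j) :
    max (RM W i) (RM W j) ≤ RM What i := by
  have hmono : IsUpperSet (W : Set (Finset (Fin n))) := fun S T hST hS => hW.1 S T hS hST
  rw [hdon.eq_donateGame hij]
  refine max_le (RM_le_RM_donateGame hmono) ?_
  calc RM W j = RM (relabelGame (Equiv.swap i j) W) i := by
        rw [← RM_relabelGame (e := Equiv.swap i j) j, Equiv.swap_apply_right]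
    _ ≤ RM (donateGame (relabelGame (Equiv.swap i j) W) i j) i :=
        RM_le_RM_donateGame hmono.relabelGame
    _ = RM (donateGame W i j) i := by rw [donateGame_relabelGame_swap]
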